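/- Let S, I, R, B : [0,∞) → ℝ be a solution of the SIRB system S' = −βSI, I' = βSI − γI + βσαIR, R' = γI − βσIR, B' = βσ(1−α)IR with β>0, γ>0, σ>0, 0<α<1, initial conditions S(0)>0, I(0)>0, R(0)≥0 with (σβ/γ)·R(0) < 1, B(0)≥0, S(0)+I(0)+R(0)+B(0)=1, and suppose S(t)>0, I(t)>0 for all t≥0, and suppose S(∞) := lim_{t→∞} S(t) > 0 and let R(∞) := lim_{t→∞} R(t), B(∞) := lim_{t→∞} B(t). Then the final sizes satisfy: 0 = I(0) + (S(0) − S(∞)) + (γ/β)·ln(S(∞)/S(0)) − α·[(γ/(σβ))·ln((1 − (σβ/γ)R(∞))/(1 − (σβ/γ)R(0))) + (R(∞) − R(0))], together with R(∞) = (γ/(σβ))·(1 − (1 − (σβ/γ)·R(0))·(S(∞)/S(0))^σ) and B(∞) = B(0) − (1 − α)·[(γ/(σβ))·ln((1 − (σβ/γ)R(∞))/(1 − (σβ/γ)R(0))) + (R(∞) − R(0))]. -/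
import Mathlib

open Filter Real Set

private lemma sirb_const_on_Ici {f f' : ℝ → ℝ}
    (hf : ∀ t : ℝ, 0 ≤ t → HasDerivAt f (f' t) t)
    (h0 : ∀ t : ℝ, 0 ≤ t → f' t = 0) :
    ∀ t : ℝ, 0 ≤ t → f t = f 0 := by
  intro t ht
  exact constant_of_has_deriv_right_zero
    (fun x hx => (hf x hx.1).continuousAt.continuousWithinAt)
    (fun x hx => by
      have h := (hf x hx.1).hasDerivWithinAt (s := Set.Ici x)
      rwa [h0 x hx.1] at h) t ⟨ht, le_rfl⟩

private lemma sirb_antitone_on_Ici {f f' : ℝ → ℝ} {a : ℝ}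
    (hf : ∀ t : ℝ, a ≤ t → HasDerivAt f (f' t) t)
    (h0 : ∀ t : ℝ, a ≤ t → f' t ≤ 0) :
    AntitoneOn f (Set.Ici a) := by
  apply antitoneOn_of_deriv_nonpos (convex_Ici a)
  · exact fun x hx => (hf x hx).continuousAt.continuousWithinAt
  · intro x hx
    rw [interior_Ici] at hx
    exact (hf x hx.le).differentiableAt.differentiableWithinAt
  · intro x hx
    rw [interior_Ici] at hx
    rw [(hf x hx.le).deriv]
    exact h0 x hx.le

/-- Final size relations for the SIRB model, where
`S∞ = lim S t > 0`, `R∞ = lim R t`, `B∞ = lim B t`. -/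
theorem sirb_final_size (β γ σ α : ℝ) (S I R B : ℝ → ℝ)
    (hβ : 0 < β) (hγ : 0 < γ) (hσ : 0 < σ) (hα0 : 0 < α) (hα1 : α < 1)
    (hS' : ∀ t : ℝ, 0 ≤ t → HasDerivAt S (-(β * S t * I t)) t)
    (hI' : ∀ t : ℝ, 0 ≤ t → HasDerivAt I (β * S t * I t - γ * I t + β * σ * α * I t * R t) t)
    (hR' : ∀ t : ℝ, 0 ≤ t → HasDerivAt R (γ * I t - β * σ * I t * R t) t)
    (hB' : ∀ t : ℝ, 0 ≤ t → HasDerivAt B (β * σ * (1 - α) * I t * R t) t)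
    (hS0 : 0 < S 0) (hI0 : 0 < I 0) (hR0 : 0 ≤ R 0) (hB0 : 0 ≤ B 0)
    (hsum : S 0 + I 0 + R 0 + B 0 = 1)
    (hSpos : ∀ t : ℝ, 0 ≤ t → 0 < S t) (hIpos : ∀ t : ℝ, 0 ≤ t → 0 < I t)
    (hR0lt1 : σ * β / γ * R 0 < 1)
    (Sinf Rinf Binf : ℝ)
    (hSlim : Filter.Tendsto S Filter.atTop (nhds Sinf)) (hSinf : 0 < Sinf)
    (hRlim : Filter.Tendsto R Filter.atTop (nhds Rinf))
    (hBlim : Filter.Tendsto B Filter.atTop (nhds Binf)) :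
    0 = I 0 + (S 0 - Sinf) + γ / β * Real.log (Sinf / S 0)
        - α * (γ / (σ * β) * Real.log ((1 - σ * β / γ * Rinf) / (1 - σ * β / γ * R 0))
          + (Rinf - R 0)) ∧
    Rinf = γ / (σ * β) * (1 - (1 - σ * β / γ * R 0) * (Sinf / S 0) ^ σ) ∧
    Binf = B 0
        - (1 - α) * (γ / (σ * β) * Real.log ((1 - σ * β / γ * Rinf) / (1 - σ * β / γ * R 0))
          + (Rinf - R 0)) := by
  have hγ' : (γ : ℝ) ≠ 0 := hγ.ne'
  have hβ' : (β : ℝ) ≠ 0 := hβ.ne'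
  have hσ' : (σ : ℝ) ≠ 0 := hσ.ne'
  set u : ℝ → ℝ := fun t => 1 - σ * β / γ * R t with hu_def
  have hu0 : 0 < u 0 := by simp only [hu_def]; linarith
  -- derivative of u
  have hu' : ∀ t : ℝ, 0 ≤ t → HasDerivAt u (-(σ * β) * I t * u t) t := by
    intro t ht
    have h := ((hR' t ht).const_mul (σ * β / γ)).const_sub 1
    have heq : -(σ * β) * I t * u t = -(σ * β / γ * (γ * I t - β * σ * I t * R t)) := by
      simp only [hu_def]
      field_simp
      try tauto
    rw [heq]
    exact h
  -- conserved quantity: u * S^(-σ)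
  have hW : ∀ t : ℝ, 0 ≤ t →
      u t * S t ^ (-σ) = u 0 * S 0 ^ (-σ) := by
    apply sirb_const_on_Ici (f' := fun t =>
      (-(σ * β) * I t * u t) * S t ^ (-σ)
        + u t * (-(β * S t * I t) * (-σ) * S t ^ (-σ - 1)))
    · intro t ht
      exact (hu' t ht).mul ((hS' t ht).rpow_const (Or.inl (hSpos t ht).ne'))
    · intro t ht
      have hSne : S t ≠ 0 := (hSpos t ht).ne'
      have key : S t ^ (-σ) = S t ^ (-σ - 1) * S t := by
        rw [← Real.rpow_add_one hSne (-σ - 1)]; ring_nf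
      rw [key]; ring
  -- u t = u 0 * (S t / S 0)^σ
  have hu_eq : ∀ t : ℝ, 0 ≤ t → u t = u 0 * (S t / S 0) ^ σ := by
    intro t ht
    have h := hW t ht
    have h1 : S t ^ (-σ) = (S t ^ σ)⁻¹ := Real.rpow_neg (hSpos t ht).le σ
    have h2 : S 0 ^ (-σ) = (S 0 ^ σ)⁻¹ := Real.rpow_neg hS0.le σ
    have p1 : (0:ℝ) < S t ^ σ := Real.rpow_pos_of_pos (hSpos t ht) σ
    have p2 : (0:ℝ) < S 0 ^ σ := Real.rpow_pos_of_pos hS0 σ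
    rw [Real.div_rpow (hSpos t ht).le hS0.le]
    rw [h1, h2] at h
    field_simp at h ⊢
    linarith [h]
  have hupos : ∀ t : ℝ, 0 ≤ t → 0 < u t := by
    intro t ht
    rw [hu_eq t ht]
    exact mul_pos hu0 (Real.rpow_pos_of_pos (div_pos (hSpos t ht) hS0) σ)
  -- limit of u
  have hulim : Tendsto u atTop (nhds (1 - σ * β / γ * Rinf)) := by
    simpa using (hRlim.const_mul (σ * β / γ)).const_sub 1
  -- value of the limit via the conserved quantity
  have huinf_eq : 1 - σ * β / γ * Rinf = u 0 * (Sinf / S 0) ^ σ := by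
    have h2 : Tendsto u atTop (nhds (u 0 * (Sinf / S 0) ^ σ)) := by
      have h3 : Tendsto (fun t => u 0 * (S t / S 0) ^ σ) atTop
          (nhds (u 0 * (Sinf / S 0) ^ σ)) :=
        ((hSlim.div_const (S 0)).rpow_const
          (Or.inl (div_pos hSinf hS0).ne')).const_mul (u 0)
      apply h3.congr'
      filter_upwards [eventually_ge_atTop 0] with t ht
      exact (hu_eq t ht).symm
    exact tendsto_nhds_unique hulim h2
  have huinf_pos : 0 < 1 - σ * β / γ * Rinf := by
    rw [huinf_eq]
    exact mul_pos hu0 (Real.rpow_pos_of_pos (div_pos hSinf hS0) σ)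
  -- conservation of total population
  have hN : ∀ t : ℝ, 0 ≤ t → S t + I t + R t + B t = 1 := by
    have h := sirb_const_on_Ici (f := fun t => S t + I t + R t + B t)
      (f' := fun t => -(β * S t * I t)
        + (β * S t * I t - γ * I t + β * σ * α * I t * R t)
        + (γ * I t - β * σ * I t * R t) + β * σ * (1 - α) * I t * R t)
      (fun t ht => (((hS' t ht).add (hI' t ht)).add (hR' t ht)).add (hB' t ht))
      (fun t ht => by ring)
    intro t ht
    exact (h t ht).trans hsum
  -- limit of I
  have hIlim : Tendsto I atTop (nhds (1 - Sinf - Rinf - Binf)) := by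
    have h : Tendsto (fun t => 1 - S t - R t - B t) atTop
        (nhds (1 - Sinf - Rinf - Binf)) :=
      ((tendsto_const_nhds.sub hSlim).sub hRlim).sub hBlim
    apply h.congr'
    filter_upwards [eventually_ge_atTop 0] with t ht
    have := hN t ht; linarith
  -- S t ≥ Sinf for t ≥ 0
  have hS_anti : AntitoneOn S (Set.Ici (0:ℝ)) :=
    sirb_antitone_on_Ici hS' (fun t ht => by
      have := mul_pos (mul_pos hβ (hSpos t ht)) (hIpos t ht); linarith)
  have hS_ge : ∀ t : ℝ, 0 ≤ t → Sinf ≤ S t := by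
    intro t ht
    apply le_of_tendsto hSlim
    filter_upwards [eventually_ge_atTop t] with s hs
    exact hS_anti ht (le_trans ht hs) hs
  -- I tends to 0
  have hIinf : (1 : ℝ) - Sinf - Rinf - Binf = 0 := by
    by_contra hne
    have hInn : 0 ≤ 1 - Sinf - Rinf - Binf := by
      apply ge_of_tendsto hIlim
      filter_upwards [eventually_ge_atTop 0] with t ht
      exact (hIpos t ht).le
    have hIg : 0 < 1 - Sinf - Rinf - Binf := lt_of_le_of_ne hInn (Ne.symm hne)
    set ε := (1 - Sinf - Rinf - Binf) / 2 with hε_def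
    have hεpos : 0 < ε := by positivity
    obtain ⟨T0, hT0⟩ := ((hIlim.eventually (eventually_gt_nhds
      (by linarith : ε < 1 - Sinf - Rinf - Binf))).and
      (eventually_ge_atTop (0:ℝ))).exists_forall_of_atTop
    set T := max T0 0 with hT_def
    have hTnn : (0:ℝ) ≤ T := le_max_right _ _
    have hIge : ∀ t : ℝ, T ≤ t → ε < I t ∧ 0 ≤ t :=
      fun t ht => hT0 t (le_trans (le_max_left _ _) ht)
    set c := β * Sinf * ε with hc_def
    have hcpos : 0 < c := by positivity
    -- φ = S + c * id is antitone on [T, ∞)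
    have hφ : AntitoneOn (fun t => S t + c * t) (Set.Ici T) := by
      apply sirb_antitone_on_Ici (f' := fun t => -(β * S t * I t) + c)
      · intro t ht
        exact (hS' t (hTnn.trans ht)).add (by
          simpa using (hasDerivAt_id t).const_mul c)
      · intro t ht
        obtain ⟨hIt, htnn⟩ := hIge t ht
        have hSt := hS_ge t htnn
        have : c ≤ β * S t * I t := by
          rw [hc_def]
          have h1 : β * Sinf * ε ≤ β * S t * ε :=
            mul_le_mul_of_nonneg_right (by nlinarith) hεpos.le
          have h2 : β * S t * ε ≤ β * S t * I t :=
            mul_le_mul_of_nonneg_left hIt.le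
              (mul_nonneg hβ.le (hSpos t htnn).le)
          linarith
        linarith
    set t1 := T + S T / c with ht1_def
    have ht1ge : T ≤ t1 := by
      rw [ht1_def]
      linarith [div_pos (hSpos T hTnn) hcpos]
    have hkey : S t1 + c * t1 ≤ S T + c * T :=
      hφ (mem_Ici.mpr le_rfl) (mem_Ici.mpr ht1ge) ht1ge
    have hdist : c * t1 = c * T + S T := by
      rw [ht1_def]; field_simp
    have hcontra : S t1 ≤ 0 := by linarith
    exact absurd hcontra (not_le.mpr (hSpos t1 (hTnn.trans ht1ge)))
  have hI0lim : Tendsto I atTop (nhds 0) := hIinf ▸ hIlim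
  -- log derivatives
  have hLS : ∀ t : ℝ, 0 ≤ t →
      HasDerivAt (fun s => Real.log (S s)) (-(β * I t)) t := by
    intro t ht
    have h := (hS' t ht).log (hSpos t ht).ne'
    have heq : -(β * S t * I t) / S t = -(β * I t) := by
      field_simp [(hSpos t ht).ne']
    rwa [heq] at h
  have hLu : ∀ t : ℝ, 0 ≤ t →
      HasDerivAt (fun s => Real.log (u s)) (-(σ * β * I t)) t := by
    intro t ht
    have h := (hu' t ht).log (hupos t ht).ne'
    have heq : -(σ * β) * I t * u t / u t = -(σ * β * I t) := by
      field_simp [(hupos t ht).ne']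
    rwa [heq] at h
  -- conserved quantity F
  have hF : ∀ t : ℝ, 0 ≤ t →
      I t + S t - γ / β * Real.log (S t)
        + α * (γ / (σ * β) * Real.log (u t) + R t)
      = I 0 + S 0 - γ / β * Real.log (S 0)
        + α * (γ / (σ * β) * Real.log (u 0) + R 0) := by
    apply sirb_const_on_Ici (f' := fun t =>
      (β * S t * I t - γ * I t + β * σ * α * I t * R t) + (-(β * S t * I t))
        - γ / β * (-(β * I t))
        + α * (γ / (σ * β) * (-(σ * β * I t)) + (γ * I t - β * σ * I t * R t)))
    · intro t ht
      exact (((hI' t ht).add (hS' t ht)).sub ((hLS t ht).const_mul (γ / β))).add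
        ((((hLu t ht).const_mul (γ / (σ * β))).add (hR' t ht)).const_mul α)
    · intro t ht
      field_simp
      ring
  -- conserved quantity G
  have hG : ∀ t : ℝ, 0 ≤ t →
      B t + (1 - α) * (γ / (σ * β) * Real.log (u t) + R t)
      = B 0 + (1 - α) * (γ / (σ * β) * Real.log (u 0) + R 0) := by
    apply sirb_const_on_Ici (f' := fun t =>
      β * σ * (1 - α) * I t * R t
        + (1 - α) * (γ / (σ * β) * (-(σ * β * I t)) + (γ * I t - β * σ * I t * R t)))
    · intro t ht
      exact (hB' t ht).add
        ((((hLu t ht).const_mul (γ / (σ * β))).add (hR' t ht)).const_mul (1 - α))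
    · intro t ht
      field_simp
      ring
  -- limits of log S and log u
  have hlogS : Tendsto (fun t => Real.log (S t)) atTop (nhds (Real.log Sinf)) :=
    hSlim.log hSinf.ne'
  have hlogu : Tendsto (fun t => Real.log (u t)) atTop
      (nhds (Real.log (1 - σ * β / γ * Rinf))) :=
    hulim.log huinf_pos.ne'
  -- limit identity for F
  have hFlim : I 0 + S 0 - γ / β * Real.log (S 0)
        + α * (γ / (σ * β) * Real.log (u 0) + R 0)
      = 0 + Sinf - γ / β * Real.log Sinf
        + α * (γ / (σ * β) * Real.log (1 - σ * β / γ * Rinf) + Rinf) := by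
    have h1 : Tendsto (fun t => I t + S t - γ / β * Real.log (S t)
        + α * (γ / (σ * β) * Real.log (u t) + R t)) atTop
        (nhds (0 + Sinf - γ / β * Real.log Sinf
          + α * (γ / (σ * β) * Real.log (1 - σ * β / γ * Rinf) + Rinf))) :=
      (((hI0lim.add hSlim).sub (hlogS.const_mul (γ / β))).add
        (((hlogu.const_mul (γ / (σ * β))).add hRlim).const_mul α))
    have h2 : Tendsto (fun t => I t + S t - γ / β * Real.log (S t)
        + α * (γ / (σ * β) * Real.log (u t) + R t)) atTop
        (nhds (I 0 + S 0 - γ / β * Real.log (S 0)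
          + α * (γ / (σ * β) * Real.log (u 0) + R 0))) := by
      apply Tendsto.congr' _ tendsto_const_nhds
      filter_upwards [eventually_ge_atTop 0] with t ht
      exact (hF t ht).symm
    exact tendsto_nhds_unique h2 h1
  -- limit identity for G
  have hGlim : B 0 + (1 - α) * (γ / (σ * β) * Real.log (u 0) + R 0)
      = Binf + (1 - α) * (γ / (σ * β) * Real.log (1 - σ * β / γ * Rinf) + Rinf) := by
    have h1 : Tendsto (fun t => B t + (1 - α) * (γ / (σ * β) * Real.log (u t) + R t))
        atTop (nhds (Binf + (1 - α) * (γ / (σ * β)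
          * Real.log (1 - σ * β / γ * Rinf) + Rinf))) :=
      hBlim.add (((hlogu.const_mul (γ / (σ * β))).add hRlim).const_mul (1 - α))
    have h2 : Tendsto (fun t => B t + (1 - α) * (γ / (σ * β) * Real.log (u t) + R t))
        atTop (nhds (B 0 + (1 - α) * (γ / (σ * β) * Real.log (u 0) + R 0))) := by
      apply Tendsto.congr' _ tendsto_const_nhds
      filter_upwards [eventually_ge_atTop 0] with t ht
      exact (hG t ht).symm
    exact tendsto_nhds_unique h2 h1
  have hu00 : u 0 = 1 - σ * β / γ * R 0 := rfl
  have hlogdivS : Real.log (Sinf / S 0) = Real.log Sinf - Real.log (S 0) :=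
    Real.log_div hSinf.ne' hS0.ne'
  have hlogdivu : Real.log ((1 - σ * β / γ * Rinf) / (1 - σ * β / γ * R 0))
      = Real.log (1 - σ * β / γ * Rinf) - Real.log (1 - σ * β / γ * R 0) :=
    Real.log_div huinf_pos.ne' (by rw [← hu00]; exact hu0.ne')
  refine ⟨?_, ?_, ?_⟩
  · rw [hlogdivS, hlogdivu]
    rw [hu00] at hFlim
    linarith [hFlim]
  · rw [hu00] at huinf_eq
    rw [← huinf_eq]
    field_simp
    ring
  · rw [hlogdivu]
    rw [hu00] at hGlim
    linarith [hGlim]
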